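/- arXiv:1803.04812 — 4 statements merged into one kernel-verified Lean document; each statement's English description precedes it below -/
import Mathlib

section
/- Let T be a finite tree on vertex set V with a designated root node t and strictly positive edge weights r_e for each edge e. Let H be the reduced weighted Laplacian of T with edge weights 1/r_e, i.e., the matrix indexed by V \ {t} with H(a,a) = Σ_{b : (ab) an edge of T} 1/r_{ab}, H(a,b) = −1/r_{ab} if (ab) is an edge, and H(a,b) = 0 otherwise. Then H is invertible and for all non-root nodes a, b, the entry H⁻¹(a,b) equals Σ_{e ∈ P_{at} ∩ P_{bt}} r_e, the sum of the weights r_e over edges common to the unique path from a to t and the unique path from b to t. -/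
open SimpleGraph Finset

/-- The edge set of the unique path between two vertices of a tree. -/
noncomputable def pathEdges {V : Type} [DecidableEq V] {G : SimpleGraph V}
    (hG : G.IsTree) (a b : V) : Finset (Sym2 V) :=
  ((hG.existsUnique_path a b).choose.edges).toFinset

/-!
Let `f v = ∑ e ∈ P_{vt} ∩ P_{bt}, r e`, so `f t = 0`. Across an edge `a c` the paths to `t` from
`a` and from `c` differ by that edge alone, so `f a - f c = ± r_{ac}` if `ac ∈ P_{bt}` and `0`
otherwise, with sign `+` exactly when `c` is the next vertex after `a` towards `t`. Hence
`(H f) a = ∑_{c ~ a} (f a - f c) / r_{ac}` is a signed count of the edges of `P_{bt}` at `a`,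
and since `P_{bt}` is traversed towards the root this count is `1` at `a = b` and `0` at every
other vertex `a ≠ t`. So `H` has the right inverse `(a, b) ↦ ∑ e ∈ P_{at} ∩ P_{bt}, r e`.
-/

namespace SimpleGraph.IsTree

variable {V : Type} {G : SimpleGraph V} (hG : G.IsTree)

noncomputable def uniquePath (a b : V) : G.Walk a b := (hG.existsUnique_path a b).choose

theorem isPath_uniquePath (a b : V) : (hG.uniquePath a b).IsPath :=
  (hG.existsUnique_path a b).choose_spec.1

theorem eq_uniquePath {a b : V} {p : G.Walk a b} (hp : p.IsPath) : p = hG.uniquePath a b :=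
  (hG.existsUnique_path a b).choose_spec.2 p hp

theorem uniquePath_self (a : V) : hG.uniquePath a a = .nil :=
  (hG.eq_uniquePath .nil).symm

/-- The initial segment up to `c` is a path from `a` to `c`, hence the single edge `a c`. -/
theorem uniquePath_eq_cons_of_mem_support [DecidableEq V] {a b c : V} (h : G.Adj a c)
    (hc : c ∈ (hG.uniquePath a b).support) :
    hG.uniquePath a b = .cons h (hG.uniquePath c b) := by
  have hp := hG.isPath_uniquePath a b
  have htake : (hG.uniquePath a b).takeUntil c hc = .cons h .nil :=
    (hG.eq_uniquePath (hp.takeUntil hc)).trans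
      (hG.eq_uniquePath (by simp [h.ne] : (Walk.cons h .nil).IsPath)).symm
  have hdrop := hG.eq_uniquePath (hp.dropUntil hc)
  rw [← (hG.uniquePath a b).take_spec hc, htake, hdrop]
  rfl

theorem uniquePath_eq_cons_or_eq_cons [DecidableEq V] {a c : V} (b : V) (h : G.Adj a c) :
    hG.uniquePath a b = .cons h (hG.uniquePath c b) ∨
      hG.uniquePath c b = .cons h.symm (hG.uniquePath a b) := by
  by_cases hc : c ∈ (hG.uniquePath a b).support
  · exact .inl (hG.uniquePath_eq_cons_of_mem_support h hc)
  · exact .inr (hG.eq_uniquePath ((hG.isPath_uniquePath a b).cons hc)).symm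

end SimpleGraph.IsTree

section PathEdges

variable {V : Type} [DecidableEq V] {G : SimpleGraph V} (hG : G.IsTree)

theorem pathEdges_eq (a b : V) : pathEdges hG a b = (hG.uniquePath a b).edges.toFinset := rfl

theorem pathEdges_self (a : V) : pathEdges hG a a = ∅ := by
  simp [pathEdges_eq, hG.uniquePath_self]

theorem sum_pathEdges {R : Type*} [AddCommMonoid R] (g : Sym2 V → R) (a b : V) :
    ∑ e ∈ pathEdges hG a b, g e = ((hG.uniquePath a b).edges.map g).sum :=
  List.sum_toFinset g (hG.isPath_uniquePath a b).isTrail.edges_nodup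

theorem sum_pathEdges_inter_sub_of_adj {R : Type*} [Ring R] (g : Sym2 V → R)
    (S : Finset (Sym2 V)) {a c : V} (b : V) (h : G.Adj a c) :
    ∑ e ∈ pathEdges hG a b ∩ S, g e - ∑ e ∈ pathEdges hG c b ∩ S, g e =
      (if s(a, c) ∈ pathEdges hG a b then 1 else -1) * (if s(a, c) ∈ S then g s(a, c) else 0) := by
  simp only [← filter_mem_eq_inter, sum_filter]
  rw [sum_pathEdges, sum_pathEdges, pathEdges_eq]
  simp only [List.mem_toFinset]
  have hpath := hG.isPath_uniquePath c b
  rcases hG.uniquePath_eq_cons_or_eq_cons b h with hcons | hcons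
  · simp [hcons]
  · rw [hcons] at hpath ⊢
    have hnot : s(a, c) ∉ (hG.uniquePath a b).edges := by
      simpa [Sym2.eq_swap] using ((Walk.isTrail_cons _ _).1 hpath.isTrail).2
    simp [hnot, Sym2.eq_swap, neg_ite]

end PathEdges

theorem Sym2.sum_ite_mk_eq {V R : Type*} [Fintype V] [DecidableEq V] [AddCommMonoid R]
    {x y : V} (hxy : x ≠ y) (a : V) (g : V → R) :
    ∑ c, (if s(a, c) = s(x, y) then g c else 0) =
      (if a = x then g y else 0) + (if a = y then g x else 0) := by
  by_cases hax : a = x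
  · subst hax
    simp [hxy]
  by_cases hay : a = y
  · subst hay
    simp [Sym2.eq_swap (a := a), hax]
  have hne : ∀ c, s(a, c) ≠ s(x, y) := fun c he => by
    rcases Sym2.mem_iff.1 (he ▸ Sym2.mem_mk_left a c) with h | h <;> contradiction
  simp [hne, hax, hay]

theorem List.ite_mem_cons {α R : Type*} [DecidableEq α] [AddZeroClass R] {e : α} {l : List α}
    (he : e ∉ l) (x : α) (r : R) :
    (if x ∈ e :: l then r else 0) = (if x = e then r else 0) + (if x ∈ l then r else 0) := by
  by_cases hx : x = e
  · simp [hx, he]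
  · simp [hx]

/-- Every edge of a path to the root is traversed towards the root, so it counts `+1` at its first
endpoint and `-1` at its second; the contributions cancel at inner vertices and leave `1` at `x`. -/
theorem sum_sign_mem_edges_of_isPath {V : Type} {R : Type*} [Fintype V] [DecidableEq V] [Ring R]
    {G : SimpleGraph V} (hG : G.IsTree) {t a : V} (ha : a ≠ t) {x : V} (p : G.Walk x t)
    (hp : p.IsPath) :
    ∑ c, (if s(a, c) ∈ p.edges then (if s(a, c) ∈ pathEdges hG a t then (1 : R) else -1) else 0) =
      if a = x then 1 else 0 := by
  induction p with
  | nil => simp [ha]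
  | @cons x d t hxd q ih =>
    obtain ⟨hq, hxq⟩ := (Walk.cons_isPath_iff _ _).1 hp
    have hx : s(x, d) ∈ pathEdges hG x t := by
      rw [pathEdges_eq, ← hG.eq_uniquePath hp]
      simp
    have hd : s(d, x) ∉ pathEdges hG d t := by
      rw [pathEdges_eq, ← hG.eq_uniquePath hq, List.mem_toFinset]
      exact fun h => hxq (q.snd_mem_support_of_mem_edges h)
    have hxd_q : s(x, d) ∉ q.edges := fun h => hxq (q.fst_mem_support_of_mem_edges h)
    rw [Walk.edges_cons]
    simp only [List.ite_mem_cons hxd_q]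
    rw [sum_add_distrib, ih ha hq, Sym2.sum_ite_mk_eq hxd.ne]
    by_cases hax : a = x
    · subst hax
      simp [hx, hxd.ne]
    · by_cases had : a = d
      · subst had
        simp [hd, hax]
      · simp [hax, had]

namespace SimpleGraph

open scoped Matrix

variable {V R : Type*} [Fintype V] [DecidableEq V] (G : SimpleGraph V) [DecidableRel G.Adj]

def weightedLapMatrix [AddCommGroup R] (w : Sym2 V → R) : Matrix V V R :=
  Matrix.of fun a b =>
    if a = b then ∑ c, (if G.Adj a c then w s(a, c) else 0)
    else if G.Adj a b then -w s(a, b) else 0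

theorem weightedLapMatrix_mulVec_apply [Ring R] (w : Sym2 V → R) (f : V → R) (a : V) :
    (G.weightedLapMatrix w *ᵥ f) a = ∑ c, (if G.Adj a c then w s(a, c) * (f a - f c) else 0) := by
  have hterm : ∀ c, G.weightedLapMatrix w a c * f c =
      (if a = c then (∑ c, (if G.Adj a c then w s(a, c) else 0)) * f a else 0) -
        (if G.Adj a c then w s(a, c) * f c else 0) := by
    intro c
    by_cases hac : a = c
    · subst hac
      simp [weightedLapMatrix]
    · by_cases hadj : G.Adj a c <;> simp [weightedLapMatrix, hac, hadj]
  simp only [Matrix.mulVec, dotProduct, hterm, sum_sub_distrib, sum_ite_eq, mem_univ, if_true,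
    sum_mul, mul_sub]
  rw [← sum_sub_distrib]
  refine sum_congr rfl fun c _ => ?_
  split_ifs <;> simp

end SimpleGraph

open scoped Matrix in
/-- The function `v ↦ ∑ e ∈ P_{vt} ∩ P_{bt}, r e` is the potential of a unit current entering
at `b` and leaving at the root `t`. -/
theorem weightedLapMatrix_mulVec_sum_inter_pathEdges {V : Type} {K : Type*} [Fintype V]
    [DecidableEq V] [Field K] {G : SimpleGraph V} [DecidableRel G.Adj] (hG : G.IsTree)
    {r : Sym2 V → K}
    (hr : ∀ e ∈ G.edgeSet, r e ≠ 0) {t a : V} (ha : a ≠ t) (b : V) :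
    (G.weightedLapMatrix (fun e => 1 / r e) *ᵥ
        fun v => ∑ e ∈ pathEdges hG v t ∩ pathEdges hG b t, r e) a = if a = b then 1 else 0 := by
  rw [weightedLapMatrix_mulVec_apply,
    ← sum_sign_mem_edges_of_isPath hG ha _ (hG.isPath_uniquePath b t)]
  refine sum_congr rfl fun c _ => ?_
  by_cases hac : G.Adj a c
  · have hrac : r s(a, c) ≠ 0 := hr _ hac
    rw [if_pos hac, sum_pathEdges_inter_sub_of_adj hG _ _ t hac, pathEdges_eq hG b t]
    simp only [List.mem_toFinset]
    split_ifs <;> simp [hrac]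
  · have hnot : s(a, c) ∉ (hG.uniquePath b t).edges := fun h => hac (Walk.adj_of_mem_edges _ h)
    simp [hac, hnot]

/-- For a finite tree `G` with root `t` and strictly positive edge
weights `r`, the reduced weighted Laplacian `H` with edge weights `1/r` is invertible,
and `H⁻¹ a b` equals the sum of the weights `r e` over the edges common to the path
from `a` to `t` and the path from `b` to `t`. -/
theorem reduced_laplacian_inverse_eq_common_path_sum
    {V : Type} [Fintype V] [DecidableEq V] (G : SimpleGraph V) [DecidableRel G.Adj]
    (hG : G.IsTree) (t : V) (r : Sym2 V → ℝ) (hr : ∀ e ∈ G.edgeSet, 0 < r e)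
    (H : Matrix {v : V // v ≠ t} {v : V // v ≠ t} ℝ)
    (hH : ∀ a b : {v : V // v ≠ t},
      H a b =
        if (a : V) = (b : V) then
          ∑ c : V, (if G.Adj (a : V) c then 1 / r s((a : V), c) else 0)
        else
          if G.Adj (a : V) (b : V) then -(1 / r s((a : V), (b : V))) else 0) :
    IsUnit H.det ∧
      ∀ a b : {v : V // v ≠ t},
        H⁻¹ a b = ∑ e ∈ pathEdges hG (a : V) t ∩ pathEdges hG (b : V) t, r e := by
  set M : Matrix {v : V // v ≠ t} {v : V // v ≠ t} ℝ :=
    Matrix.of fun a b => ∑ e ∈ pathEdges hG (a : V) t ∩ pathEdges hG (b : V) t, r e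
  have hHM : H * M = 1 := by
    ext a b
    rw [Matrix.mul_apply]
    have hroot : ∑ e ∈ pathEdges hG t t ∩ pathEdges hG b t, r e = 0 := by
      simp [pathEdges_self]
    calc ∑ c, H a c * M c b
        = (G.weightedLapMatrix (fun e => 1 / r e)).mulVec
            (fun v => ∑ e ∈ pathEdges hG v t ∩ pathEdges hG b t, r e) a := by
          rw [Matrix.mulVec, dotProduct, Fintype.sum_eq_add_sum_subtype_ne _ t, hroot, mul_zero,
            zero_add]
          exact sum_congr rfl fun c _ => congrArg (· * M c b) (hH a c)
      _ = if (a : V) = b then 1 else 0 :=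
          weightedLapMatrix_mulVec_sum_inter_pathEdges hG (fun e he => (hr e he).ne') a.2 b
      _ = (1 : Matrix {v : V // v ≠ t} {v : V // v ≠ t} ℝ) a b := by
          simp [Matrix.one_apply, Subtype.coe_inj]
  exact ⟨Matrix.isUnit_det_of_right_inverse hHM, fun a b => by rw [Matrix.inv_eq_right_inv hHM]; rfl⟩
end

section
/- Under the linear coupled power flow model on a rooted tree, if a and b are two leaf nodes sharing a common parent k₁, then the variance of the voltage difference φ_{ab} := E[(v_a − v_b)²] satisfies φ_{ab} = r_{a k₁}² E[p_a²] + x_{a k₁}² E[q_a²] + 2 r_{a k₁} x_{a k₁} E[p_a q_a] + r_{k₁ b}² E[p_b²] + x_{k₁ b}² E[q_b²] + 2 r_{k₁ b} x_{k₁ b} E[p_b q_b]. -/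
open SimpleGraph Finset MeasureTheory

/-- The vertices (support) of the unique path between two vertices of a tree. -/
noncomputable def pathSupport {V : Type} {G : SimpleGraph V}
    (hG : G.IsTree) (a b : V) : List V :=
  (hG.existsUnique_path a b).choose.support

/-!
A leaf `a` with neighbour `k` is not an interior vertex of any path, so the path from `a` to the
root is the edge `ak` followed by the path from `k`, and `ak` lies on no other root path. Hence the
rows of `H_r⁻¹` and `H_x⁻¹` belonging to two leaves `a`, `b` with common neighbour `k` differ
only in the columns `a` and `b`, which gives
`v_a - v_b = (r_{ak} p_a + x_{ak} q_a) - (r_{bk} p_b + x_{bk} q_b)`.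
The two brackets are uncorrelated, so the second moment of the difference is the sum of their
second moments.
-/

namespace SimpleGraph

lemma neighborSet_subsingleton_of_degree_eq_one {V : Type} {G : SimpleGraph V} {a : V}
    [Fintype (G.neighborSet a)] (ha : G.degree a = 1) : (G.neighborSet a).Subsingleton := by
  rw [← Set.subsingleton_coe, ← Fintype.card_le_one_iff_subsingleton,
    card_neighborSet_eq_degree, ha]

variable {V : Type} [DecidableEq V] {G : SimpleGraph V} (hG : G.IsTree)

lemma pathEdges_eq_edges_toFinset {a b : V} {w : G.Walk a b} (hw : w.IsPath) :
    pathEdges hG a b = w.edges.toFinset := by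
  rw [pathEdges, (hG.existsUnique_path a b).unique (hG.existsUnique_path a b).choose_spec.1 hw]

lemma pathEdges_of_neighborSet_subsingleton {a k t : V} (ha : (G.neighborSet a).Subsingleton)
    (hak : G.Adj a k) (hat : a ≠ t) :
    pathEdges hG a t = insert s(a, k) (pathEdges hG k t) := by
  obtain ⟨hw, -⟩ := (hG.existsUnique_path k t).choose_spec
  have ha_notMem := hw.isTrail.not_mem_support_of_subsingleton_neighborSet hak.ne hat ha
  rw [pathEdges_eq_edges_toFinset hG (hw.cons (h := hak) ha_notMem), Walk.edges_cons,
    List.toFinset_cons, pathEdges]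

lemma edge_notMem_pathEdges_of_neighborSet_subsingleton {a k t c : V}
    (ha : (G.neighborSet a).Subsingleton) (hat : a ≠ t) (hca : c ≠ a) :
    s(a, k) ∉ pathEdges hG c t := by
  obtain ⟨hw, -⟩ := (hG.existsUnique_path c t).choose_spec
  rw [pathEdges, List.mem_toFinset]
  exact fun hmem => hw.isTrail.not_mem_support_of_subsingleton_neighborSet hca.symm hat ha
    (Walk.fst_mem_support_of_mem_edges _ hmem)

lemma sum_pathEdges_inter_of_neighborSet_subsingleton {M : Type*} [AddCommMonoid M]
    (y : Sym2 V → M) {a k t : V} (ha : (G.neighborSet a).Subsingleton) (hak : G.Adj a k)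
    (hat : a ≠ t) (c : V) :
    ∑ e ∈ pathEdges hG a t ∩ pathEdges hG c t, y e
      = (if c = a then y s(a, k) else 0) + ∑ e ∈ pathEdges hG k t ∩ pathEdges hG c t, y e := by
  split_ifs with hca
  · subst hca
    rw [pathEdges_of_neighborSet_subsingleton hG ha hak hat, inter_self,
      inter_eq_left.mpr (subset_insert _ _),
      sum_insert (edge_notMem_pathEdges_of_neighborSet_subsingleton hG ha hat hak.ne')]
  · rw [zero_add, pathEdges_of_neighborSet_subsingleton hG ha hak hat,
      insert_inter_of_notMem (edge_notMem_pathEdges_of_neighborSet_subsingleton hG ha hat hca)]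

lemma sum_pathEdges_inter_sub_of_neighborSet_subsingleton {M : Type*} [AddCommGroup M]
    (y : Sym2 V → M) {a b k t : V} (ha : (G.neighborSet a).Subsingleton)
    (hb : (G.neighborSet b).Subsingleton) (hak : G.Adj a k) (hbk : G.Adj b k) (hat : a ≠ t)
    (hbt : b ≠ t) (c : V) :
    ∑ e ∈ pathEdges hG a t ∩ pathEdges hG c t, y e - ∑ e ∈ pathEdges hG b t ∩ pathEdges hG c t, y e
      = (if c = a then y s(a, k) else 0) - (if c = b then y s(b, k) else 0) := by
  rw [sum_pathEdges_inter_of_neighborSet_subsingleton hG y ha hak hat,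
    sum_pathEdges_inter_of_neighborSet_subsingleton hG y hb hbk hbt, add_sub_add_right_eq_sub]

end SimpleGraph

namespace MeasureTheory

variable {Ω : Type} [MeasurableSpace Ω] {μ : Measure Ω}

lemma integral_linComb_mul_linComb {f g h k : Ω → ℝ} (hf : MemLp f 2 μ) (hg : MemLp g 2 μ)
    (hh : MemLp h 2 μ) (hk : MemLp k 2 μ) (α β γ δ : ℝ) :
    ∫ ω, (α * f ω + β * g ω) * (γ * h ω + δ * k ω) ∂μ
      = α * γ * ∫ ω, f ω * h ω ∂μ + α * δ * ∫ ω, f ω * k ω ∂μ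
        + β * γ * ∫ ω, g ω * h ω ∂μ + β * δ * ∫ ω, g ω * k ω ∂μ := by
  have hfh : Integrable (fun ω => α * γ * (f ω * h ω)) μ :=
    (hf.integrable_mul hh).const_mul _
  have hfk : Integrable (fun ω => α * δ * (f ω * k ω)) μ :=
    (hf.integrable_mul hk).const_mul _
  have hgh : Integrable (fun ω => β * γ * (g ω * h ω)) μ :=
    (hg.integrable_mul hh).const_mul _
  have hgk : Integrable (fun ω => β * δ * (g ω * k ω)) μ :=
    (hg.integrable_mul hk).const_mul _
  calc ∫ ω, (α * f ω + β * g ω) * (γ * h ω + δ * k ω) ∂μ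
      = ∫ ω, α * γ * (f ω * h ω) + α * δ * (f ω * k ω)
          + β * γ * (g ω * h ω) + β * δ * (g ω * k ω) ∂μ := by
        congr 1; funext ω; ring
    _ = _ := by
        rw [integral_add ((hfh.fun_add hfk).fun_add hgh) hgk, integral_add (hfh.fun_add hfk) hgh,
          integral_add hfh hfk, integral_const_mul, integral_const_mul, integral_const_mul,
          integral_const_mul]

lemma integral_linComb_sq {f g : Ω → ℝ} (hf : MemLp f 2 μ) (hg : MemLp g 2 μ) (α β : ℝ) :
    ∫ ω, (α * f ω + β * g ω) ^ 2 ∂μ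
      = α ^ 2 * ∫ ω, f ω ^ 2 ∂μ + β ^ 2 * ∫ ω, g ω ^ 2 ∂μ
        + 2 * α * β * ∫ ω, f ω * g ω ∂μ := by
  simp_rw [sq, integral_linComb_mul_linComb hf hg hf hg, mul_comm (g _) (f _)]
  ring

lemma integral_sub_sq_of_integral_mul_eq_zero {F G : Ω → ℝ} (hF : MemLp F 2 μ)
    (hG : MemLp G 2 μ) (hFG : ∫ ω, F ω * G ω ∂μ = 0) :
    ∫ ω, (F ω - G ω) ^ 2 ∂μ = ∫ ω, F ω ^ 2 ∂μ + ∫ ω, G ω ^ 2 ∂μ := by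
  simpa [hFG, sub_eq_add_neg] using integral_linComb_sq hF hG 1 (-1)

lemma integral_linComb_sub_linComb_sq {f₁ g₁ f₂ g₂ : Ω → ℝ} (hf₁ : MemLp f₁ 2 μ)
    (hg₁ : MemLp g₁ 2 μ) (hf₂ : MemLp f₂ 2 μ) (hg₂ : MemLp g₂ 2 μ)
    (hff : ∫ ω, f₁ ω * f₂ ω ∂μ = 0) (hfg : ∫ ω, f₁ ω * g₂ ω ∂μ = 0)
    (hgf : ∫ ω, g₁ ω * f₂ ω ∂μ = 0) (hgg : ∫ ω, g₁ ω * g₂ ω ∂μ = 0) (α β γ δ : ℝ) :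
    ∫ ω, ((α * f₁ ω + β * g₁ ω) - (γ * f₂ ω + δ * g₂ ω)) ^ 2 ∂μ
      = α ^ 2 * ∫ ω, f₁ ω ^ 2 ∂μ + β ^ 2 * ∫ ω, g₁ ω ^ 2 ∂μ + 2 * α * β * ∫ ω, f₁ ω * g₁ ω ∂μ
        + γ ^ 2 * ∫ ω, f₂ ω ^ 2 ∂μ + δ ^ 2 * ∫ ω, g₂ ω ^ 2 ∂μ
        + 2 * γ * δ * ∫ ω, f₂ ω * g₂ ω ∂μ := by
  have hcross : ∫ ω, (α * f₁ ω + β * g₁ ω) * (γ * f₂ ω + δ * g₂ ω) ∂μ = 0 := by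
    rw [integral_linComb_mul_linComb hf₁ hg₁ hf₂ hg₂, hff, hfg, hgf, hgg]
    ring
  have hX₁ : MemLp (fun ω => α * f₁ ω + β * g₁ ω) 2 μ := (hf₁.const_mul α).add (hg₁.const_mul β)
  have hX₂ : MemLp (fun ω => γ * f₂ ω + δ * g₂ ω) 2 μ := (hf₂.const_mul γ).add (hg₂.const_mul δ)
  rw [integral_sub_sq_of_integral_mul_eq_zero hX₁ hX₂ hcross, integral_linComb_sq hf₁ hg₁,
    integral_linComb_sq hf₂ hg₂]
  ring

end MeasureTheory

theorem lcpf_sibling_leaf_voltage_difference_variance_general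
    {V : Type} [Fintype V] [DecidableEq V] (G : SimpleGraph V) [DecidableRel G.Adj]
    (hG : G.IsTree) (t : V) (r x : Sym2 V → ℝ)
    (Hr Hx : {v : V // v ≠ t} → {v : V // v ≠ t} → ℝ)
    (hHr : ∀ a b : {v : V // v ≠ t},
      Hr a b = ∑ e ∈ pathEdges hG (a : V) t ∩ pathEdges hG (b : V) t, r e)
    (hHx : ∀ a b : {v : V // v ≠ t},
      Hx a b = ∑ e ∈ pathEdges hG (a : V) t ∩ pathEdges hG (b : V) t, x e)
    (Ω : Type) (mΩ : MeasurableSpace Ω) (μ : Measure Ω)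
    (p q : {v : V // v ≠ t} → Ω → ℝ)
    (hpL2 : ∀ a, MemLp (p a) 2 μ) (hqL2 : ∀ a, MemLp (q a) 2 μ)
    (huncorr : ∀ a b, a ≠ b →
      (∫ ω, p a ω * p b ω ∂μ = 0) ∧ (∫ ω, q a ω * q b ω ∂μ = 0) ∧
        (∫ ω, p a ω * q b ω ∂μ = 0))
    (v : {v : V // v ≠ t} → Ω → ℝ)
    (hv : ∀ a ω, v a ω = ∑ c, (Hr a c * p c ω + Hx a c * q c ω))
    -- `a` and `b` are distinct leaf nodes with common parent `k₁`
    (a b : {v : V // v ≠ t}) (k₁ : V) (hab : a ≠ b)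
    (haleaf : G.degree (a : V) = 1) (hbleaf : G.degree (b : V) = 1)
    (hak : G.Adj (a : V) k₁) (hbk : G.Adj (b : V) k₁) :
    ∫ ω, (v a ω - v b ω) ^ 2 ∂μ =
      (r s((a : V), k₁)) ^ 2 * ∫ ω, (p a ω) ^ 2 ∂μ
        + (x s((a : V), k₁)) ^ 2 * ∫ ω, (q a ω) ^ 2 ∂μ
        + 2 * r s((a : V), k₁) * x s((a : V), k₁) * ∫ ω, p a ω * q a ω ∂μ
        + (r s(k₁, (b : V))) ^ 2 * ∫ ω, (p b ω) ^ 2 ∂μ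
        + (x s(k₁, (b : V))) ^ 2 * ∫ ω, (q b ω) ^ 2 ∂μ
        + 2 * r s(k₁, (b : V)) * x s(k₁, (b : V)) * ∫ ω, p b ω * q b ω ∂μ := by
  set ea : Sym2 V := s((a : V), k₁)
  set eb : Sym2 V := s((b : V), k₁)
  have hrow : ∀ (y : Sym2 V → ℝ) (c : {v : V // v ≠ t}),
      ∑ e ∈ pathEdges hG (a : V) t ∩ pathEdges hG (c : V) t, y e
        - ∑ e ∈ pathEdges hG (b : V) t ∩ pathEdges hG (c : V) t, y e
        = (if c = a then y ea else 0) - (if c = b then y eb else 0) := by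
    intro y c
    simpa only [Subtype.coe_inj] using sum_pathEdges_inter_sub_of_neighborSet_subsingleton hG y
      (neighborSet_subsingleton_of_degree_eq_one haleaf)
      (neighborSet_subsingleton_of_degree_eq_one hbleaf) hak hbk a.2 b.2 c
  have hvab : ∀ ω, v a ω - v b ω
      = (r ea * p a ω + x ea * q a ω) - (r eb * p b ω + x eb * q b ω) := by
    intro ω
    calc v a ω - v b ω
        = ∑ c, ((Hr a c - Hr b c) * p c ω + (Hx a c - Hx b c) * q c ω) := by
          rw [hv, hv, ← sum_sub_distrib]
          exact sum_congr rfl fun c _ => by ring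
      _ = _ := by
          simp only [hHr, hHx, hrow, sub_mul, ite_mul, zero_mul, sum_add_distrib,
            sum_sub_distrib, sum_ite_eq', mem_univ, if_true]
          ring
  obtain ⟨hpp, hqq, hpq⟩ := huncorr a b hab
  have hqp : ∫ ω, q a ω * p b ω ∂μ = 0 := by
    simpa only [mul_comm] using (huncorr b a (Ne.symm hab)).2.2
  simp_rw [hvab]
  rw [integral_linComb_sub_linComb_sq (hpL2 a) (hqL2 a) (hpL2 b) (hqL2 b) hpp hpq hqp hqq,
    Sym2.eq_swap]

/-- Under the LC-PF model, if `a` and `b` are two leaf nodes sharing a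
common parent `k₁`, then the variance of the voltage difference `φ_{ab} = E[(v_a − v_b)²]`
equals `r_{ak₁}² E[p_a²] + x_{ak₁}² E[q_a²] + 2 r_{ak₁} x_{ak₁} E[p_a q_a]
+ r_{k₁b}² E[p_b²] + x_{k₁b}² E[q_b²] + 2 r_{k₁b} x_{k₁b} E[p_b q_b]`. -/
theorem lcpf_sibling_leaf_voltage_difference_variance
    {V : Type} [Fintype V] [DecidableEq V] (G : SimpleGraph V) [DecidableRel G.Adj]
    (hG : G.IsTree) (t : V) (r x : Sym2 V → ℝ)
    (Hr Hx : {v : V // v ≠ t} → {v : V // v ≠ t} → ℝ)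
    (hHr : ∀ a b : {v : V // v ≠ t},
      Hr a b = ∑ e ∈ pathEdges hG (a : V) t ∩ pathEdges hG (b : V) t, r e)
    (hHx : ∀ a b : {v : V // v ≠ t},
      Hx a b = ∑ e ∈ pathEdges hG (a : V) t ∩ pathEdges hG (b : V) t, x e)
    (Ω : Type) (mΩ : MeasurableSpace Ω) (μ : Measure Ω) [IsProbabilityMeasure μ]
    (p q : {v : V // v ≠ t} → Ω → ℝ)
    (hpL2 : ∀ a, MemLp (p a) 2 μ) (hqL2 : ∀ a, MemLp (q a) 2 μ)
    (hpmean : ∀ a, ∫ ω, p a ω ∂μ = 0) (hqmean : ∀ a, ∫ ω, q a ω ∂μ = 0)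
    (huncorr : ∀ a b, a ≠ b →
      (∫ ω, p a ω * p b ω ∂μ = 0) ∧ (∫ ω, q a ω * q b ω ∂μ = 0) ∧
        (∫ ω, p a ω * q b ω ∂μ = 0))
    (v : {v : V // v ≠ t} → Ω → ℝ)
    (hv : ∀ a ω, v a ω = ∑ c, (Hr a c * p c ω + Hx a c * q c ω))
    -- `a` and `b` are distinct leaf nodes with common parent `k₁`
    (a b : {v : V // v ≠ t}) (k₁ : V) (hab : a ≠ b)
    (haleaf : G.degree (a : V) = 1) (hbleaf : G.degree (b : V) = 1)
    (hak : G.Adj (a : V) k₁) (hka : k₁ ∈ pathSupport hG (a : V) t)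
    (hbk : G.Adj (b : V) k₁) (hkb : k₁ ∈ pathSupport hG (b : V) t) :
    ∫ ω, (v a ω - v b ω) ^ 2 ∂μ =
      (r s((a : V), k₁)) ^ 2 * ∫ ω, (p a ω) ^ 2 ∂μ
        + (x s((a : V), k₁)) ^ 2 * ∫ ω, (q a ω) ^ 2 ∂μ
        + 2 * r s((a : V), k₁) * x s((a : V), k₁) * ∫ ω, p a ω * q a ω ∂μ
        + (r s(k₁, (b : V))) ^ 2 * ∫ ω, (p b ω) ^ 2 ∂μ
        + (x s(k₁, (b : V))) ^ 2 * ∫ ω, (q b ω) ^ 2 ∂μ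
        + 2 * r s(k₁, (b : V)) * x s(k₁, (b : V)) * ∫ ω, p b ω * q b ω ∂μ :=
  lcpf_sibling_leaf_voltage_difference_variance_general G hG t r x Hr Hx hHr hHx Ω mΩ μ p q hpL2
    hqL2 huncorr v hv a b k₁ hab haleaf hbleaf hak hbk
end

section
/- Let T be a finite tree on vertex set V with at least 3 nodes and strictly positive edge weights w_e, and let d(a,b) = Σ_{e ∈ P_{ab}} w_e be the induced additive tree metric. For distinct nodes a, b define Φ_{abc} := d(a,c) − d(b,c) for c ∈ V \ {a,b}. Then Φ_{abc} = d(a,b) for all c ∈ V \ {a,b} if and only if a is a leaf node and b is adjacent to a (b is the parent of leaf a). -/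
open SimpleGraph Finset

namespace SimpleGraph.IsTree

variable {V : Type} [DecidableEq V] {G : SimpleGraph V} (hG : G.IsTree) (w : Sym2 V → ℝ)

noncomputable def treeDist (u v : V) : ℝ :=
  ∑ e ∈ pathEdges hG u v, w e

theorem treeDist_eq_sum_edges {u v : V} {p : G.Walk u v} (hp : p.IsPath) :
    hG.treeDist w u v = (p.edges.map w).sum := by
  rw [treeDist, pathEdges, ← (hG.existsUnique_path u v).choose_spec.2 p hp,
    List.sum_toFinset w hp.isTrail.edges_nodup]

theorem treeDist_comm (u v : V) : hG.treeDist w u v = hG.treeDist w v u := by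
  obtain ⟨p, hp, -⟩ := hG.existsUnique_path u v
  rw [hG.treeDist_eq_sum_edges w hp, hG.treeDist_eq_sum_edges w hp.reverse,
    Walk.edges_reverse, List.map_reverse, List.sum_reverse]

theorem treeDist_append {u x v : V} {p : G.Walk u x} {q : G.Walk x v}
    (hpq : (p.append q).IsPath) :
    hG.treeDist w u v = hG.treeDist w u x + hG.treeDist w x v := by
  rw [hG.treeDist_eq_sum_edges w hpq, hG.treeDist_eq_sum_edges w hpq.of_append_left,
    hG.treeDist_eq_sum_edges w hpq.of_append_right, Walk.edges_append, List.map_append,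
    List.sum_append]

theorem treeDist_pos (hw : ∀ e ∈ G.edgeSet, 0 < w e) {u v : V} (huv : u ≠ v) :
    0 < hG.treeDist w u v := by
  obtain ⟨p, hp, -⟩ := hG.existsUnique_path u v
  rw [hG.treeDist_eq_sum_edges w hp]
  refine List.sum_pos _ ?_ ?_
  · simp only [List.mem_map]
    rintro _ ⟨e, he, rfl⟩
    exact hw e (p.edges_subset_edgeSet he)
  · simpa [Walk.edges_eq_nil] using Walk.not_nil_of_ne huv

theorem exists_adj_treeDist_eq_add {u v : V} (huv : u ≠ v) :
    ∃ x, G.Adj u x ∧ hG.treeDist w u v = hG.treeDist w u x + hG.treeDist w x v := by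
  obtain ⟨p, hp, -⟩ := hG.existsUnique_path u v
  cases p with
  | nil => exact absurd rfl huv
  | cons hux q => exact ⟨_, hux, hG.treeDist_append w (p := .cons hux .nil) hp⟩

theorem treeDist_eq_add_of_adj_of_adj {u x v : V} (hux : G.Adj u x) (hxv : G.Adj x v)
    (huv : u ≠ v) : hG.treeDist w u v = hG.treeDist w u x + hG.treeDist w x v :=
  hG.treeDist_append w (p := .cons hux .nil) (q := .cons hxv .nil) <| by
    simp [Walk.cons_isPath_iff, hux.ne, hxv.ne, huv]

end SimpleGraph.IsTree

theorem tree_metric_parent_child_characterization_general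
    {V : Type} [Fintype V] [DecidableEq V] (G : SimpleGraph V) [DecidableRel G.Adj]
    (hG : G.IsTree)
    (w : Sym2 V → ℝ) (hw : ∀ e ∈ G.edgeSet, 0 < w e)
    (d : V → V → ℝ) (hd : ∀ a b : V, d a b = ∑ e ∈ pathEdges hG a b, w e)
    (a b : V) (hab : a ≠ b) :
    (∀ c : V, c ≠ a → c ≠ b → d a c - d b c = d a b) ↔
      (G.degree a = 1 ∧ G.Adj a b) := by
  obtain rfl : d = hG.treeDist w := funext₂ hd
  rw [degree_eq_one_iff_existsUnique_adj]
  constructor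
  · intro hcond
    obtain ⟨x, hax, hsplit⟩ := hG.exists_adj_treeDist_eq_add w hab
    have hxb : x = b := by
      by_contra hxb
      have hcx := hcond x hax.ne' hxb
      have hxb_pos := hG.treeDist_pos w hw hxb
      linarith [hG.treeDist_comm w b x]
    subst x
    refine ⟨⟨b, hax, fun y hay => ?_⟩, hax⟩
    by_contra hyb
    have hcy := hcond y hay.ne' hyb
    have hbay := hG.treeDist_eq_add_of_adj_of_adj w hax.symm hay (Ne.symm hyb)
    linarith [hG.treeDist_pos w hw hab, hG.treeDist_comm w a b]
  · rintro ⟨⟨x, -, hleaf⟩, hadj⟩ c hca -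
    obtain ⟨y, hay, hsplit⟩ := hG.exists_adj_treeDist_eq_add w (Ne.symm hca)
    rw [hsplit, hleaf y hay, ← hleaf b hadj]
    ring

/-- In a finite tree with at least 3 nodes and positive edge weights,
with `d` the induced additive tree metric and `Φ_{abc} = d(a,c) − d(b,c)`, one has
`Φ_{abc} = d(a,b)` for all `c ∉ {a,b}` iff `a` is a leaf and `b` is its parent
(i.e. `b` is adjacent to `a`). -/
theorem tree_metric_parent_child_characterization
    {V : Type} [Fintype V] [DecidableEq V] (G : SimpleGraph V) [DecidableRel G.Adj]
    (hG : G.IsTree) (hcard : 3 ≤ Fintype.card V)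
    (w : Sym2 V → ℝ) (hw : ∀ e ∈ G.edgeSet, 0 < w e)
    (d : V → V → ℝ) (hd : ∀ a b : V, d a b = ∑ e ∈ pathEdges hG a b, w e)
    (a b : V) (hab : a ≠ b) :
    (∀ c : V, c ≠ a → c ≠ b → d a c - d b c = d a b) ↔
      (G.degree a = 1 ∧ G.Adj a b) :=
  tree_metric_parent_child_characterization_general G hG w hw d hd a b hab
end

section
/- Let T be a finite tree on vertex set V with at least 3 nodes and strictly positive edge weights w_e, and let d(a,b) = Σ_{e ∈ P_{ab}} w_e be the induced additive tree metric. For distinct nodes a, b define Φ_{abc} := d(a,c) − d(b,c) for c ∈ V \ {a,b}. Then the conditions −d(a,b) < Φ_{abc} < d(a,b) and Φ_{abc} = Φ_{abc'} for all c, c' ∈ V \ {a,b} hold if and only if both a and b are leaf nodes and they have a common neighbor (i.e., a and b are siblings with the same parent). -/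
open SimpleGraph Finset

/-!
Write `Φ c = d a c - d b c`. In a tree `Φ c = -d a b` exactly when `a` lies on the path from `b`
to `c`, and `Φ c = d a b` exactly when `b` lies on the path from `a` to `c`. If `a` and `b` are
adjacent, every third vertex lies beyond one of them, so the strict bounds fail; if the path from
`a` to `b` has two interior vertices, `Φ` differs at them by twice their distance. So the path is
`a - x - b`, and the strict bounds again forbid any further neighbour of `a` or of `b`.
Conversely, for siblings with parent `x` one has `Φ c = w(a, x) - w(b, x)` for every other `c`.
-/

theorem exists_ne_ne_of_three_le_card {α : Type*} [Fintype α] [DecidableEq α]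
    (h : 3 ≤ Fintype.card α) (a b : α) : ∃ c, c ≠ a ∧ c ≠ b := by
  obtain ⟨c, -, hc⟩ := exists_mem_notMem_of_card_lt_card (s := {a, b}) (t := univ)
    (card_le_two.trans_lt (by rwa [card_univ]))
  exact ⟨c, by simpa using hc⟩

def IsTreeMetric {V : Type} [DecidableEq V] {G : SimpleGraph V} (hG : G.IsTree)
    (w : Sym2 V → ℝ) (d : V → V → ℝ) : Prop :=
  ∀ a b : V, d a b = ∑ e ∈ pathEdges hG a b, w e

namespace IsTreeMetric

variable {V : Type} [DecidableEq V] {G : SimpleGraph V} {hG : G.IsTree}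
  {w : Sym2 V → ℝ} {d : V → V → ℝ} (hd : IsTreeMetric hG w d)
include hd

theorem eq_sum_of_isPath {u v : V} {p : G.Walk u v} (hp : p.IsPath) :
    d u v = (p.edges.map w).sum := by
  have hp_eq : p = (hG.existsUnique_path u v).choose :=
    (hG.existsUnique_path u v).choose_spec.2 p hp
  rw [hd, pathEdges, ← hp_eq, List.sum_toFinset _ hp.edges_nodup]

theorem comm (u v : V) : d u v = d v u := by
  obtain ⟨p, hp, -⟩ := hG.existsUnique_path u v
  rw [hd.eq_sum_of_isPath hp, hd.eq_sum_of_isPath hp.reverse, Walk.edges_reverse,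
    List.map_reverse, List.sum_reverse]

theorem apply_of_adj {u v : V} (h : G.Adj u v) : d u v = w s(u, v) := by
  simpa using hd.eq_sum_of_isPath (Path.singleton h).2

theorem pos_of_ne (hw : ∀ e ∈ G.edgeSet, 0 < w e) {u v : V} (huv : u ≠ v) : 0 < d u v := by
  obtain ⟨p, hp, -⟩ := hG.existsUnique_path u v
  rw [hd.eq_sum_of_isPath hp]
  refine List.sum_pos _ ?_ (by simpa using Walk.not_nil_of_ne huv)
  simp only [List.mem_map]
  rintro _ ⟨e, he, rfl⟩
  exact hw e (p.edges_subset_edgeSet he)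

theorem add_eq_of_mem_support {u v m : V} {p : G.Walk u v} (hp : p.IsPath)
    (hm : m ∈ p.support) : d u m + d m v = d u v := by
  rw [hd.eq_sum_of_isPath hp, hd.eq_sum_of_isPath (hp.takeUntil hm),
    hd.eq_sum_of_isPath (hp.dropUntil hm), ← List.sum_append, ← List.map_append,
    ← Walk.edges_append, Walk.take_spec]

theorem eq_add_of_degree_eq_one {a x c : V} [Fintype (G.neighborSet a)]
    (hdeg : G.degree a = 1) (hax : G.Adj a x) (hca : c ≠ a) :
    d a c = w s(a, x) + d x c := by
  obtain ⟨p, hp, -⟩ := hG.existsUnique_path a c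
  cases p with
  | nil => exact absurd rfl hca
  | cons hax' q =>
    obtain rfl := (degree_eq_one_iff_existsUnique_adj.mp hdeg).unique hax' hax
    rw [hd.eq_sum_of_isPath hp, hd.eq_sum_of_isPath hp.of_cons, Walk.edges_cons,
      List.map_cons, List.sum_cons]

theorem sub_eq_or_sub_eq_neg_of_adj {a b : V} (hab : G.Adj a b) (c : V) :
    d a c - d b c = d a b ∨ d a c - d b c = -d a b := by
  obtain ⟨p, hp, -⟩ := hG.existsUnique_path c a
  obtain ⟨q, hq, -⟩ := hG.existsUnique_path c b
  by_cases ha : a ∈ q.support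
  · have := hd.add_eq_of_mem_support hq ha
    right
    linarith [hd.comm a c, hd.comm b c]
  · have hb := hG.isAcyclic.mem_support_of_ne_mem_support_of_adj_of_isPath hp hq hab ha
    have := hd.add_eq_of_mem_support hp hb
    left
    linarith [hd.comm a c, hd.comm b c, hd.comm a b]

/-- A second neighbour `z` of `a` would put `a` on the path from `b` to `z`. -/
theorem degree_eq_one_of_forall_lt_add {a x b : V} [Fintype (G.neighborSet a)] (hax : G.Adj a x)
    (hxb : G.Adj x b) (hab : a ≠ b) (h : ∀ c, c ≠ a → c ≠ b → d b c < d b a + d a c) :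
    G.degree a = 1 := by
  refine degree_eq_one_iff_existsUnique_adj.mpr ⟨x, hax, fun z haz => ?_⟩
  by_contra hzx
  have hzb : z ≠ b := by
    rintro rfl
    exact hG.isAcyclic.cliqueFree le_rfl {a, x, z} (is3Clique_triple_iff.mpr ⟨hax, haz, hxb⟩)
  obtain ⟨p, hp, -⟩ := hG.existsUnique_path b z
  let q : G.Walk b a := .cons hxb.symm (.cons hax.symm .nil)
  have hq : q.IsPath := by simp [q, hab.symm, hax.ne', hxb.ne']
  have hzq : z ∉ q.support := by simp [q, hzb, hzx, haz.ne']
  have ha := hG.isAcyclic.mem_support_of_ne_mem_support_of_adj_of_isPath hp hq haz.symm hzq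
  linarith [hd.add_eq_of_mem_support hp ha, h z haz.ne' hzb]

theorem exists_common_neighbor [Fintype V] (hw : ∀ e ∈ G.edgeSet, 0 < w e)
    (hcard : 3 ≤ Fintype.card V) {a b : V} (hab : a ≠ b)
    (hbounds : ∀ c, c ≠ a → c ≠ b → -(d a b) < d a c - d b c ∧ d a c - d b c < d a b)
    (hconst : ∀ c c', c ≠ a → c ≠ b → c' ≠ a → c' ≠ b → d a c - d b c = d a c' - d b c') :
    ∃ x, G.Adj a x ∧ G.Adj x b := by
  obtain ⟨p, hp, -⟩ := hG.existsUnique_path a b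
  rcases p with _ | @⟨_, x, _, hax, _ | @⟨_, y, _, hxy, _ | ⟨hyz, q⟩⟩⟩
  · exact absurd rfl hab
  · obtain ⟨c, hca, hcb⟩ := exists_ne_ne_of_three_le_card hcard a b
    have := hbounds c hca hcb
    rcases hd.sub_eq_or_sub_eq_neg_of_adj hax c with h | h <;> linarith
  · exact ⟨x, hax, hxy⟩
  · -- `d a c - d b c` drops by `2 * d x y` from `c = x` to `c = y`
    exfalso
    have hnodup := hp.support_nodup
    simp only [Walk.support_cons, List.nodup_cons, List.mem_cons, not_or] at hnodup
    have hbq := q.end_mem_support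
    have hxa : x ≠ a := Ne.symm hnodup.1.1
    have hya : y ≠ a := Ne.symm hnodup.1.2.1
    have hxb : x ≠ b := fun h => hnodup.2.1.2 (h ▸ hbq)
    have hyb : y ≠ b := fun h => hnodup.2.2.1 (h ▸ hbq)
    have hx := hd.add_eq_of_mem_support hp (by simp : x ∈ _)
    have hy := hd.add_eq_of_mem_support hp (by simp : y ∈ _)
    have hxy' := hd.add_eq_of_mem_support hp.of_cons (by simp : y ∈ _)
    linarith [hconst x y hxa hxb hya hyb, hd.comm b x, hd.comm b y,
      hd.pos_of_ne hw hnodup.2.1.1]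

theorem apply_eq_add_of_degree_eq_one {a b x : V} [Fintype (G.neighborSet a)]
    (hda : G.degree a = 1) (hax : G.Adj a x) (hbx : G.Adj b x) (hab : a ≠ b) :
    d a b = w s(a, x) + w s(b, x) := by
  rw [hd.eq_add_of_degree_eq_one hda hax hab.symm, hd.comm x b, hd.apply_of_adj hbx]

theorem sub_eq_of_degree_eq_one {a b x c : V} [Fintype (G.neighborSet a)]
    [Fintype (G.neighborSet b)] (hda : G.degree a = 1) (hdb : G.degree b = 1)
    (hax : G.Adj a x) (hbx : G.Adj b x) (hca : c ≠ a) (hcb : c ≠ b) :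
    d a c - d b c = w s(a, x) - w s(b, x) := by
  rw [hd.eq_add_of_degree_eq_one hda hax hca, hd.eq_add_of_degree_eq_one hdb hbx hcb]
  ring

end IsTreeMetric

/-- In a finite tree with at least 3 nodes and positive edge weights,
with `d` the induced additive tree metric and `Φ_{abc} = d(a,c) − d(b,c)`, the
conditions `−d(a,b) < Φ_{abc} < d(a,b)` and `Φ_{abc} = Φ_{abc'}` for all
`c, c' ∉ {a,b}` hold iff `a` and `b` are both leaves with a common neighbor
(siblings with the same parent). -/
theorem tree_metric_sibling_characterization
    {V : Type} [Fintype V] [DecidableEq V] (G : SimpleGraph V) [DecidableRel G.Adj]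
    (hG : G.IsTree) (hcard : 3 ≤ Fintype.card V)
    (w : Sym2 V → ℝ) (hw : ∀ e ∈ G.edgeSet, 0 < w e)
    (d : V → V → ℝ) (hd : ∀ a b : V, d a b = ∑ e ∈ pathEdges hG a b, w e)
    (a b : V) (hab : a ≠ b) :
    ((∀ c : V, c ≠ a → c ≠ b → -(d a b) < d a c - d b c ∧ d a c - d b c < d a b) ∧
      (∀ c c' : V, c ≠ a → c ≠ b → c' ≠ a → c' ≠ b →
        d a c - d b c = d a c' - d b c')) ↔
      (G.degree a = 1 ∧ G.degree b = 1 ∧ ∃ h : V, G.Adj a h ∧ G.Adj b h) := by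
  have hd : IsTreeMetric hG w d := hd
  constructor
  · rintro ⟨hbounds, hconst⟩
    obtain ⟨x, hax, hxb⟩ := hd.exists_common_neighbor hw hcard hab hbounds hconst
    refine ⟨hd.degree_eq_one_of_forall_lt_add hax hxb hab fun c hca hcb => ?_,
      hd.degree_eq_one_of_forall_lt_add hxb.symm hax.symm hab.symm fun c hcb hca => ?_, x, hax, hxb.symm⟩
    · linarith [(hbounds c hca hcb).1, hd.comm a b]
    · linarith [(hbounds c hca hcb).2]
  · rintro ⟨hda, hdb, x, hax, hbx⟩
    have hwa := hw _ (G.mem_edgeSet.mpr hax)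
    have hwb := hw _ (G.mem_edgeSet.mpr hbx)
    have hdab := hd.apply_eq_add_of_degree_eq_one hda hax hbx hab
    refine ⟨fun c hca hcb => ?_, fun c c' hca hcb hca' hcb' => ?_⟩
    · rw [hd.sub_eq_of_degree_eq_one hda hdb hax hbx hca hcb, hdab]
      constructor <;> linarith
    · rw [hd.sub_eq_of_degree_eq_one hda hdb hax hbx hca hcb,
        hd.sub_eq_of_degree_eq_one hda hdb hax hbx hca' hcb']
end
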